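/- Let p be any probability distribution on {1,...,M_x} × {1,...,M_y} with 2 ≤ M_x ≤ M_y, and let α ∈ (0,1]. Let (X_1,Y_1),...,(X_n,Y_n) be an i.i.d. sample of size n from p, with empirical distribution p̂_n. Set ε = sqrt((2/n)·ln((2^{M_x·M_y} − 2)/α)) and define ΔI(ε) = (ε/2)·log[(M_x·M_y − 1)(M_x − 1)(M_y − 1)] + 3·ℋ(ε/2) if ε ≤ 2 − 2/M_x, and ΔI(ε) = log M_x if ε > 2 − 2/M_x. Then Pr{ I(p̂_n) − ΔI(ε) ≤ I(p) ≤ I(p̂_n) + ΔI(ε) } ≥ 1 − α, where I denotes mutual information. -/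

import Mathlib

/-!
On the event `Vdist p̂ₙ p ≤ ε` the interval holds deterministically. Through the maximal coupling
of two distributions, Fano's inequality bounds the change of each of `H(X)`, `H(Y)`, `H(X, Y)` by
`t log (M - 1) + h(t)` with `t` half the variational distance, and this is increasing in `t` up
to `1 - 1/M`; beyond that range `0 ≤ I ≤ log Mx` suffices. Conversely, if `Vdist p̂ₙ p > ε`, the
set `A = {p < p̂ₙ}` satisfies `p̂ₙ(A) - p(A) > ε/2`; by Hoeffding's inequality each of the
`2 ^ (Mx My) - 2` nontrivial events `A` has probability at most `exp (-n ε² / 2)`, and `ε` is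
chosen so that the union bound is exactly `α`.
-/

open scoped BigOperators
open MeasureTheory

/-- `p` is a probability distribution on the finite type `α`. -/
def IsDist {α : Type*} [Fintype α] (p : α → ℝ) : Prop :=
  (∀ a, 0 ≤ p a) ∧ ∑ a, p a = 1

/-- Shannon entropy (natural logarithm, with `0 · log 0 = 0`). -/
noncomputable def entropy {α : Type*} [Fintype α] (p : α → ℝ) : ℝ :=
  -∑ a, p a * Real.log (p a)

/-- Variational distance between two distributions on the same finite set. -/
noncomputable def Vdist {α : Type*} [Fintype α] (p q : α → ℝ) : ℝ :=
  ∑ a, |p a - q a|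

/-- First marginal of a joint distribution. -/
noncomputable def margX {Mx My : ℕ} (p : Fin Mx × Fin My → ℝ) : Fin Mx → ℝ :=
  fun i => ∑ j, p (i, j)

/-- Second marginal of a joint distribution. -/
noncomputable def margY {Mx My : ℕ} (p : Fin Mx × Fin My → ℝ) : Fin My → ℝ :=
  fun j => ∑ i, p (i, j)

/-- Mutual information of a joint distribution. -/
noncomputable def mutInfo {Mx My : ℕ} (p : Fin Mx × Fin My → ℝ) : ℝ :=
  entropy (margX p) + entropy (margY p) - entropy p

/-- Binary entropy function. -/
noncomputable def binEnt (x : ℝ) : ℝ :=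
  -x * Real.log x - (1 - x) * Real.log (1 - x)

/-- The measure on a finite type induced by a (real-valued) distribution `p`. -/
noncomputable def distMeasure {α : Type*} [Fintype α] [MeasurableSpace α]
    (p : α → ℝ) : Measure α :=
  ∑ a : α, ENNReal.ofReal (p a) • Measure.dirac a

/-- The empirical distribution of the sample `Z 0 ω, …, Z (n-1) ω`. -/
noncomputable def empDist {α : Type*} [Fintype α] [DecidableEq α] {Ω : Type*} {n : ℕ}
    (Z : Fin n → Ω → α) (ω : Ω) : α → ℝ :=
  fun a => ((Finset.univ.filter fun k => Z k ω = a).card : ℝ) / n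

open Finset Real ProbabilityTheory

section Entropy

variable {ι γ δ : Type*} [Fintype ι] [Fintype γ] [Fintype δ]

lemma mul_log_le_sub_add_mul_log {w y : ℝ} (hw : 0 ≤ w) (hy : 0 ≤ y) (hwy : w ≠ 0 → y ≠ 0) :
    w * log y ≤ y - w + w * log w := by
  rcases hw.eq_or_lt with rfl | hw
  · simpa using hy
  have hy := (hy.lt_of_ne' (hwy hw.ne'))
  have := log_le_sub_one_of_pos (div_pos hy hw)
  rw [log_div hy.ne' hw.ne'] at this
  have := mul_le_mul_of_nonneg_left this hw.le
  rw [mul_sub, mul_sub, mul_div_cancel₀ _ hw.ne'] at this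
  linarith

/-- Gibbs' inequality. -/
theorem entropy_le_neg_sum_mul_log {w y : ι → ℝ} (hw : ∀ i, 0 ≤ w i) (hy : ∀ i, 0 ≤ y i)
    (hwy : ∀ i, w i ≠ 0 → y i ≠ 0) (hsum : ∑ i, y i ≤ ∑ i, w i) :
    entropy w ≤ -∑ i, w i * log (y i) := by
  have := sum_le_sum fun i (_ : i ∈ univ) => mul_log_le_sub_add_mul_log (hw i) (hy i) (hwy i)
  rw [sum_add_distrib, sum_sub_distrib] at this
  unfold entropy
  linarith

lemma sum_mul_log_mul {w a b : ι → ℝ} (hab : ∀ i, w i ≠ 0 → a i ≠ 0 ∧ b i ≠ 0) :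
    ∑ i, w i * log (a i * b i) = ∑ i, w i * log (a i) + ∑ i, w i * log (b i) := by
  rw [← sum_add_distrib]
  refine sum_congr rfl fun i _ => ?_
  by_cases hw : w i = 0
  · simp [hw]
  · rw [log_mul (hab i hw).1 (hab i hw).2, mul_add]

lemma sum_mul_comp_fst (w : γ × δ → ℝ) (f : γ → ℝ) :
    ∑ x, w x * f x.1 = ∑ a, (∑ b, w (a, b)) * f a := by
  simp_rw [Fintype.sum_prod_type, sum_mul]

lemma sum_mul_comp_snd (w : γ × δ → ℝ) (f : δ → ℝ) :
    ∑ x, w x * f x.2 = ∑ b, (∑ a, w (a, b)) * f b := by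
  simp_rw [Fintype.sum_prod_type, sum_mul]
  exact sum_comm

theorem entropy_le_log_card {p : ι → ℝ} (hp : IsDist p) : entropy p ≤ log (Fintype.card ι) := by
  have hsum : ∑ _i : ι, (Fintype.card ι : ℝ)⁻¹ ≤ ∑ i, p i := by
    rw [hp.2, sum_const, card_univ, nsmul_eq_mul]
    exact mul_inv_le_one
  refine (entropy_le_neg_sum_mul_log hp.1 (fun _ => by positivity) (fun i _ => ?_) hsum).trans_eq ?_
  · have : Nonempty ι := ⟨i⟩
    positivity
  · simp [log_inv, ← sum_mul, hp.2]

theorem entropy_fst_le_entropy {w : γ × δ → ℝ} (hw : ∀ x, 0 ≤ w x) :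
    entropy (fun a => ∑ b, w (a, b)) ≤ entropy w := by
  rw [entropy, entropy, neg_le_neg_iff, Fintype.sum_prod_type, ← sub_nonneg, ← sum_sub_distrib]
  refine sum_nonneg fun a _ => ?_
  rw [sum_mul, ← sum_sub_distrib]
  refine sum_nonneg fun b _ => ?_
  rcases (hw (a, b)).eq_or_lt with h | h
  · simp [← h]
  · rw [← mul_sub]
    refine mul_nonneg h.le (sub_nonneg.2 ?_)
    exact log_le_log h (single_le_sum (fun b _ => hw (a, b)) (mem_univ b))

theorem entropy_snd_le_entropy {w : γ × δ → ℝ} (hw : ∀ x, 0 ≤ w x) :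
    entropy (fun b => ∑ a, w (a, b)) ≤ entropy w := by
  have h := entropy_fst_le_entropy (w := w ∘ Prod.swap) fun x => hw x.swap
  rwa [entropy, entropy, ← Equiv.prodComm γ δ |>.sum_comp] at h

end Entropy

section VariationalDistance

variable {γ : Type*} [Fintype γ]

lemma vdist_comm (p q : γ → ℝ) : Vdist p q = Vdist q p := by
  simp only [Vdist, abs_sub_comm]

lemma vdist_nonneg (p q : γ → ℝ) : 0 ≤ Vdist p q :=
  sum_nonneg fun _ _ => abs_nonneg _

lemma vdist_eq_two_mul_sum_sub_min {p q : γ → ℝ} (hp : ∑ a, p a = 1) (hq : ∑ a, q a = 1) :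
    Vdist p q = 2 * ∑ a, (p a - min (p a) (q a)) := by
  have h : ∀ a, |p a - q a| = (p a - min (p a) (q a)) + (q a - min (p a) (q a)) := fun a => by
    linarith [max_sub_min_eq_abs' (p a) (q a), min_add_max (p a) (q a)]
  have : ∑ a, (q a - min (p a) (q a)) = ∑ a, (p a - min (p a) (q a)) := by
    simp only [sum_sub_distrib, hp, hq]
  rw [Vdist, sum_congr rfl fun a _ => h a, sum_add_distrib, this, two_mul]

theorem exists_coupling {p q : γ → ℝ} (hp : IsDist p) (hq : IsDist q) :
    ∃ w : γ × γ → ℝ, (∀ x, 0 ≤ w x) ∧ (∀ a, ∑ b, w (a, b) = p a) ∧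
      (∀ b, ∑ a, w (a, b) = q b) ∧ ∑ a, w (a, a) = 1 - Vdist p q / 2 := by
  classical
  set m : γ → ℝ := fun a => min (p a) (q a)
  set t := Vdist p q / 2
  have hpm : ∑ a, (p a - m a) = t := by
    simp only [t, vdist_eq_two_mul_sum_sub_min hp.2 hq.2, m]; ring
  have hqm : ∑ a, (q a - m a) = t := by
    simp only [t, vdist_comm p q, vdist_eq_two_mul_sum_sub_min hq.2 hp.2, m, min_comm (q _)]
    ring
  have hcancel : ∀ f : γ → ℝ, (∀ a, 0 ≤ f a) → ∑ a, f a = t → ∀ a, f a * t / t = f a := by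
    intro f hf hft a
    rcases eq_or_ne t 0 with ht | ht
    · have : f a = 0 :=
        le_antisymm ((single_le_sum (fun a _ => hf a) (mem_univ a)).trans (hft.trans ht).le) (hf a)
      simp [this]
    · field_simp
  have hpm0 : ∀ a, 0 ≤ p a - m a := fun a => sub_nonneg.2 (min_le_left _ _)
  have hqm0 : ∀ a, 0 ≤ q a - m a := fun a => sub_nonneg.2 (min_le_right _ _)
  refine ⟨fun x => (if x.1 = x.2 then m x.1 else 0) + (p x.1 - m x.1) * (q x.2 - m x.2) / t,
    fun x => add_nonneg ?_ ?_, fun a => ?_, fun b => ?_, ?_⟩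
  · split_ifs
    exacts [le_min (hp.1 _) (hq.1 _), le_rfl]
  · exact div_nonneg (mul_nonneg (hpm0 _) (hqm0 _)) (div_nonneg (vdist_nonneg p q) zero_le_two)
  · simp only [sum_add_distrib, sum_ite_eq, mem_univ, if_true, ← sum_div, ← mul_sum, hqm,
      hcancel _ hpm0 hpm]
    ring
  · simp only [sum_add_distrib, sum_ite_eq', mem_univ, if_true, ← sum_div, ← sum_mul, hpm,
      mul_comm t, hcancel _ hqm0 hqm]
    ring
  · have hdiag : ∀ a, (p a - m a) * (q a - m a) = 0 := fun a => by
      rcases min_choice (p a) (q a) with h | h <;> simp [m, h]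
    simp only [if_true, hdiag, zero_div, add_zero, m]
    linarith [sum_sub_distrib (s := univ) p m, hp.2]

lemma exists_finset_lt_sum_sub {q p : γ → ℝ} (hq : ∑ a, q a = 1) (hp : ∑ a, p a = 1) {ε : ℝ}
    (hε : 0 ≤ ε) (h : ε < Vdist q p) :
    ∃ A : Finset γ, A ≠ ∅ ∧ A ≠ univ ∧ ε / 2 < ∑ a ∈ A, (q a - p a) := by
  classical
  have hA : Vdist q p = 2 * ∑ a ∈ univ.filter (fun a => p a < q a), (q a - p a) := by
    rw [vdist_eq_two_mul_sum_sub_min hq hp, sum_filter]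
    congr 1
    refine sum_congr rfl fun a _ => ?_
    split_ifs with h
    · rw [min_eq_right h.le]
    · rw [min_eq_left (not_lt.1 h), sub_self]
  refine ⟨univ.filter (fun a => p a < q a), fun h => ?_, fun h => ?_, by linarith⟩ <;>
    rw [h] at hA
  · rw [sum_empty, mul_zero] at hA
    linarith
  · rw [sum_sub_distrib, hq, hp, sub_self, mul_zero] at hA
    linarith

end VariationalDistance

section Fano

variable {γ : Type*} [Fintype γ]

section FanoWeight

variable [DecidableEq γ]

/-- Given `Y = b`, put `X = b` with probability `1 - s` and spread `s` uniformly over the other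
`|γ| - 1` values. -/
noncomputable def fanoWeight (s : ℝ) (x : γ × γ) : ℝ :=
  if x.1 = x.2 then 1 - s else s / (Fintype.card γ - 1)

lemma sum_fanoWeight_le_one (b : γ) {s : ℝ} (hs : 0 ≤ s) : ∑ a, fanoWeight s (a, b) ≤ 1 := by
  simp only [fanoWeight]
  rw [sum_ite, filter_eq', filter_ne', if_pos (mem_univ b), sum_const, sum_const,
    card_singleton, card_erase_of_mem (mem_univ b), card_univ, nsmul_eq_mul, nsmul_eq_mul,
    Nat.cast_sub (Fintype.card_pos_iff.2 ⟨b⟩), Nat.cast_one]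
  rcases eq_or_ne ((Fintype.card γ : ℝ) - 1) 0 with h | h
  · simp [h, hs]
  · rw [mul_div_cancel₀ _ h]; ring_nf; rfl

lemma neg_sum_mul_log_fanoWeight {w : γ × γ → ℝ} {s : ℝ}
    (hdiag : ∑ x : γ × γ, (if x.1 = x.2 then w x else 0) = 1 - s)
    (hoff : ∑ x : γ × γ, (if x.1 = x.2 then 0 else w x) = s) :
    -∑ x, w x * log (fanoWeight s x) = qaryEntropy (Fintype.card γ) s := by
  have hsplit : ∀ x, w x * log (fanoWeight s x) = (if x.1 = x.2 then w x else 0) * log (1 - s) +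
      (if x.1 = x.2 then 0 else w x) * log (s / (Fintype.card γ - 1)) := fun x => by
    simp only [fanoWeight]; split_ifs <;> ring
  have hlog : s * log (s / (Fintype.card γ - 1)) = s * log s - s * log (Fintype.card γ - 1) := by
    rcases eq_or_ne s 0 with rfl | hs0
    · simp
    obtain ⟨x, -, hx⟩ := exists_ne_zero_of_sum_ne_zero (hoff.trans_ne hs0)
    have hcard := Fintype.one_lt_card_iff.2 ⟨x.1, x.2, fun h => hx (if_pos h)⟩
    rw [log_div hs0 (sub_ne_zero.2 (by exact_mod_cast hcard.ne')), mul_sub]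
  rw [sum_congr rfl fun x _ => hsplit x, sum_add_distrib, ← sum_mul, ← sum_mul, hdiag, hoff,
    hlog, qaryEntropy, binEntropy, log_inv, log_inv]
  push_cast
  ring

lemma fanoWeight_nonneg {s : ℝ} (hs0 : 0 ≤ s) (hs1 : s ≤ 1) (x : γ × γ) :
    0 ≤ fanoWeight s x := by
  unfold fanoWeight
  split_ifs
  · linarith
  · exact div_nonneg hs0 (sub_nonneg.2 (by exact_mod_cast Fintype.card_pos_iff.2 ⟨x.1⟩))

lemma fanoWeight_ne_zero {w : γ × γ → ℝ} {s : ℝ} (hw : ∀ x, 0 ≤ w x)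
    (hdiag : ∑ x : γ × γ, (if x.1 = x.2 then w x else 0) = 1 - s)
    (hoff : ∑ x : γ × γ, (if x.1 = x.2 then 0 else w x) = s) {x : γ × γ} (hx : w x ≠ 0) :
    fanoWeight s x ≠ 0 := by
  have hpos := (hw x).lt_of_ne' hx
  unfold fanoWeight
  split_ifs with h
  · have := hdiag ▸ single_le_sum (fun x _ => by split_ifs; exacts [hw x, le_rfl]) (mem_univ x)
    rw [if_pos h] at this
    linarith
  · have := hoff ▸ single_le_sum (fun x _ => by split_ifs; exacts [le_rfl, hw x]) (mem_univ x)
    rw [if_neg h] at this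
    have hcard := Fintype.one_lt_card_iff.2 ⟨x.1, x.2, h⟩
    exact (div_pos (hpos.trans_le this) (sub_pos.2 (by exact_mod_cast hcard))).ne'

end FanoWeight

/-- Fano's inequality: if `w` is the law of `(X, Y)`, `q` the law of `Y` and `s = P(X ≠ Y)`,
then `H(X | Y) ≤ s log (|γ| - 1) + h(s)`. -/
theorem entropy_sub_entropy_le_qaryEntropy_of_diag {w : γ × γ → ℝ} {q : γ → ℝ} {s : ℝ}
    (hw : ∀ x, 0 ≤ w x) (hwq : ∀ b, ∑ a, w (a, b) = q b) (hq : ∑ b, q b = 1)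
    (hs : ∑ a, w (a, a) = 1 - s) :
    entropy w - entropy q ≤ qaryEntropy (Fintype.card γ) s := by
  classical
  have hw1 : ∑ x, w x = 1 := by rw [Fintype.sum_prod_type, sum_comm]; simp [hwq, hq]
  have hdiag : ∑ x : γ × γ, (if x.1 = x.2 then w x else 0) = 1 - s := by
    simp [Fintype.sum_prod_type, hs]
  have hoff : ∑ x : γ × γ, (if x.1 = x.2 then 0 else w x) = s := by
    have : ∀ x : γ × γ, (if x.1 = x.2 then 0 else w x) = w x - if x.1 = x.2 then w x else 0 :=
      fun x => by split_ifs <;> ring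
    rw [sum_congr rfl fun x _ => this x, sum_sub_distrib, hw1, hdiag]
    ring
  have hs0 : 0 ≤ s := hoff ▸ sum_nonneg fun x _ => by split_ifs; exacts [le_rfl, hw x]
  have hs1 : s ≤ 1 := by linarith [hs ▸ sum_nonneg fun a _ => hw (a, a)]
  have hq0 : ∀ b, 0 ≤ q b := fun b => hwq b ▸ sum_nonneg fun a _ => hw (a, b)
  have hne : ∀ x : γ × γ, w x ≠ 0 → q x.2 ≠ 0 ∧ fanoWeight s x ≠ 0 := fun x hx =>
    ⟨((hw x).lt_of_ne' hx |>.trans_le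
      (hwq x.2 ▸ single_le_sum (fun a _ => hw (a, x.2)) (mem_univ x.1))).ne',
      fanoWeight_ne_zero hw hdiag hoff hx⟩
  have hsum : ∑ x, q x.2 * fanoWeight s x ≤ ∑ x, w x := by
    rw [hw1, Fintype.sum_prod_type, sum_comm, ← hq]
    refine sum_le_sum fun b _ => ?_
    change ∑ a, q b * fanoWeight s (a, b) ≤ q b
    rw [← mul_sum]
    exact mul_le_of_le_one_right (hq0 b) (sum_fanoWeight_le_one b hs0)
  have h := entropy_le_neg_sum_mul_log hw
    (fun x => mul_nonneg (hq0 _) (fanoWeight_nonneg hs0 hs1 x))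
    (fun x hx => mul_ne_zero (hne x hx).1 (hne x hx).2) hsum
  rw [sum_mul_log_mul hne, sum_mul_comp_snd w (fun b => log (q b)), neg_add,
    neg_sum_mul_log_fanoWeight hdiag hoff] at h
  simp only [hwq, entropy] at h ⊢
  linarith

theorem entropy_sub_entropy_le_qaryEntropy {p q : γ → ℝ} (hp : IsDist p) (hq : IsDist q) :
    entropy p - entropy q ≤ qaryEntropy (Fintype.card γ) (Vdist p q / 2) := by
  obtain ⟨w, hw, hwp, hwq, hdiag⟩ := exists_coupling hp hq
  have hpw : entropy p ≤ entropy w := by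
    simpa only [hwp] using entropy_fst_le_entropy hw
  linarith [entropy_sub_entropy_le_qaryEntropy_of_diag hw hwq hq.2 hdiag]

theorem abs_entropy_sub_le_qaryEntropy {p q : γ → ℝ} (hp : IsDist p) (hq : IsDist q) {t : ℝ}
    (hcard : 2 ≤ Fintype.card γ) (hpq : Vdist p q ≤ 2 * t) (ht : t ≤ 1 - 1 / Fintype.card γ) :
    |entropy p - entropy q| ≤ qaryEntropy (Fintype.card γ) t := by
  have hV := vdist_nonneg p q
  have hmono : qaryEntropy (Fintype.card γ) (Vdist p q / 2) ≤
      qaryEntropy (Fintype.card γ) t :=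
    (qaryEntropy_strictMonoOn hcard).monotoneOn ⟨by positivity, by linarith⟩
      ⟨by linarith, ht⟩ (by linarith)
  rw [abs_sub_le_iff]
  exact ⟨(entropy_sub_entropy_le_qaryEntropy hp hq).trans hmono,
    (entropy_sub_entropy_le_qaryEntropy hq hp).trans (vdist_comm p q ▸ hmono)⟩

end Fano

lemma binEnt_eq_binEntropy : binEnt = binEntropy := by
  ext x
  simp only [binEnt, binEntropy, log_inv]
  ring

section MutualInformation

variable {Mx My : ℕ} {p q : Fin Mx × Fin My → ℝ}

lemma IsDist.margX (hp : IsDist p) : IsDist (margX p) :=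
  ⟨fun a => sum_nonneg fun b _ => hp.1 (a, b), by rw [← hp.2, Fintype.sum_prod_type]; rfl⟩

lemma IsDist.margY (hp : IsDist p) : IsDist (margY p) :=
  ⟨fun b => sum_nonneg fun a _ => hp.1 (a, b),
    by rw [← hp.2, Fintype.sum_prod_type, sum_comm]; rfl⟩

lemma le_margX (hp : IsDist p) (x : Fin Mx × Fin My) : p x ≤ margX p x.1 :=
  single_le_sum (fun b _ => hp.1 (x.1, b)) (mem_univ x.2)

lemma le_margY (hp : IsDist p) (x : Fin Mx × Fin My) : p x ≤ margY p x.2 :=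
  single_le_sum (fun a _ => hp.1 (a, x.2)) (mem_univ x.1)

/-- Gibbs' inequality against the product of the marginals. -/
theorem mutInfo_nonneg (hp : IsDist p) : 0 ≤ mutInfo p := by
  have hne : ∀ x, p x ≠ 0 → margX p x.1 ≠ 0 ∧ margY p x.2 ≠ 0 := fun x hx =>
    ⟨((hp.1 x).lt_of_ne' hx |>.trans_le (le_margX hp x)).ne',
      ((hp.1 x).lt_of_ne' hx |>.trans_le (le_margY hp x)).ne'⟩
  have hsum : ∑ x : Fin Mx × Fin My, margX p x.1 * margY p x.2 ≤ ∑ x, p x := by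
    simp_rw [Fintype.sum_prod_type, ← mul_sum, ← sum_mul, hp.margY.2, hp.margX.2, one_mul,
      ← Fintype.sum_prod_type, hp.2, le_refl]
  have h := entropy_le_neg_sum_mul_log hp.1
    (fun x => mul_nonneg (hp.margX.1 x.1) (hp.margY.1 x.2))
    (fun x hx => mul_ne_zero (hne x hx).1 (hne x hx).2) hsum
  rw [sum_mul_log_mul hne, sum_mul_comp_fst p (fun a => log (margX p a)),
    sum_mul_comp_snd p (fun b => log (margY p b))] at h
  have : entropy p ≤ entropy (margX p) + entropy (margY p) :=
    h.trans_eq (by simp only [entropy, margX, margY]; ring)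
  rw [mutInfo]
  linarith

theorem mutInfo_le_log (hp : IsDist p) : mutInfo p ≤ log Mx := by
  have hX := entropy_le_log_card hp.margX
  have hY : entropy (margY p) ≤ entropy p := entropy_snd_le_entropy hp.1
  rw [Fintype.card_fin] at hX
  rw [mutInfo]
  linarith

lemma vdist_margX_le (p q : Fin Mx × Fin My → ℝ) : Vdist (margX p) (margX q) ≤ Vdist p q := by
  simp only [Vdist, margX, Fintype.sum_prod_type, ← sum_sub_distrib]
  exact sum_le_sum fun a _ => abs_sum_le_sum_abs _ _

lemma vdist_margY_le (p q : Fin Mx × Fin My → ℝ) : Vdist (margY p) (margY q) ≤ Vdist p q := by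
  simp only [Vdist, margY, Fintype.sum_prod_type_right, ← sum_sub_distrib]
  exact sum_le_sum fun b _ => abs_sum_le_sum_abs _ _

theorem abs_mutInfo_sub_le (hMx : 2 ≤ Mx) (hMxy : Mx ≤ My) (hp : IsDist p) (hq : IsDist q)
    {ε : ℝ} (hV : Vdist q p ≤ ε) (hε : ε ≤ 2 - 2 / (Mx : ℝ)) :
    |mutInfo q - mutInfo p| ≤
      ε / 2 * log (((Mx : ℝ) * My - 1) * ((Mx : ℝ) - 1) * ((My : ℝ) - 1)) +
        3 * binEnt (ε / 2) := by
  have hMx' : (2 : ℝ) ≤ Mx := by exact_mod_cast hMx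
  have hMxy' : (Mx : ℝ) ≤ My := by exact_mod_cast hMxy
  have hMxMy : (Mx : ℝ) ≤ Mx * My := le_mul_of_one_le_right (by positivity) (by linarith)
  have ht : ε / 2 ≤ 1 - 1 / (Mx : ℝ) := by linarith [show 2 / (Mx : ℝ) = 2 * (1 / Mx) by ring]
  have hX := abs_entropy_sub_le_qaryEntropy hq.margX hp.margX (t := ε / 2)
    (by simpa using hMx) (by linarith [vdist_margX_le q p]) (by simpa using ht)
  have hY := abs_entropy_sub_le_qaryEntropy hq.margY hp.margY (t := ε / 2)
    (by simpa using hMx.trans hMxy) (by linarith [vdist_margY_le q p])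
    (by simpa using ht.trans (sub_le_sub_left (one_div_le_one_div_of_le (by positivity) hMxy') 1))
  have hXY := abs_entropy_sub_le_qaryEntropy hq hp (t := ε / 2)
    (by simp only [Fintype.card_prod, Fintype.card_fin]; nlinarith) (by linarith)
    (by simpa using ht.trans (sub_le_sub_left (one_div_le_one_div_of_le (by positivity) hMxMy) 1))
  simp only [Fintype.card_prod, Fintype.card_fin, qaryEntropy] at hX hY hXY
  push_cast at hX hY hXY
  rw [log_mul (by nlinarith) (by linarith), log_mul (by nlinarith) (by linarith),
    binEnt_eq_binEntropy, mutInfo, mutInfo, abs_le]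
  constructor <;> linarith [abs_le.1 hX, abs_le.1 hY, abs_le.1 hXY]

theorem abs_mutInfo_sub_le_log (hp : IsDist p) (hq : IsDist q) :
    |mutInfo q - mutInfo p| ≤ log Mx :=
  abs_sub_le_of_nonneg_of_le (mutInfo_nonneg hq) (mutInfo_le_log hq) (mutInfo_nonneg hp)
    (mutInfo_le_log hp)

noncomputable def mutInfoHalfWidth (Mx My : ℕ) (ε : ℝ) : ℝ :=
  if ε ≤ 2 - 2 / (Mx : ℝ) then
    ε / 2 * log (((Mx : ℝ) * My - 1) * ((Mx : ℝ) - 1) * ((My : ℝ) - 1)) + 3 * binEnt (ε / 2)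
  else log (Mx : ℝ)

theorem abs_mutInfo_sub_le_mutInfoHalfWidth (hMx : 2 ≤ Mx) (hMxy : Mx ≤ My) (hp : IsDist p)
    (hq : IsDist q) {ε : ℝ} (hV : Vdist q p ≤ ε) :
    |mutInfo q - mutInfo p| ≤ mutInfoHalfWidth Mx My ε := by
  unfold mutInfoHalfWidth
  split_ifs with hε
  · exact abs_mutInfo_sub_le hMx hMxy hp hq hV hε
  · exact abs_mutInfo_sub_le_log hp hq

end MutualInformation

section EmpiricalDistribution

variable {α : Type*} [Fintype α]

lemma measureReal_distMeasure [MeasurableSpace α] [MeasurableSingletonClass α] {p : α → ℝ}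
    (hp : ∀ a, 0 ≤ p a) (A : Finset α) : (distMeasure p).real A = ∑ a ∈ A, p a := by
  classical
  simp [distMeasure, measureReal_def, Measure.dirac_apply' _ A.measurableSet,
    Set.indicator_apply, ENNReal.toReal_sum, hp]

variable [DecidableEq α] {Ω : Type*} {n : ℕ}

lemma sum_empDist_eq (Z : Fin n → Ω → α) (ω : Ω) (A : Finset α) :
    ∑ a ∈ A, empDist Z ω a = (∑ k, (A : Set α).indicator 1 (Z k ω)) / n := by
  simp only [empDist, ← sum_div, Set.indicator_apply, mem_coe, Pi.one_apply, card_filter]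
  push_cast
  rw [sum_comm]
  simp [sum_ite_eq]

lemma isDist_empDist (hn : 0 < n) (Z : Fin n → Ω → α) (ω : Ω) : IsDist (empDist Z ω) := by
  refine ⟨fun a => by unfold empDist; positivity, ?_⟩
  rw [sum_empDist_eq, coe_univ]
  simp [hn.ne']

variable [MeasurableSpace α] [MeasurableSingletonClass α] [MeasurableSpace Ω] {μ : Measure Ω}
  [IsProbabilityMeasure μ] {Z : Fin n → Ω → α} {p : α → ℝ}

/-- Hoeffding's inequality for the empirical frequency of `A`. -/
theorem measureReal_le_sum_empDist_sub_le (hn : 0 < n) (hmeas : ∀ k, Measurable (Z k))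
    (hindep : iIndepFun Z μ) (hp : ∀ a, 0 ≤ p a) (hdist : ∀ k, μ.map (Z k) = distMeasure p)
    (A : Finset α) {δ : ℝ} (hδ : 0 ≤ δ) :
    μ.real {ω | δ ≤ ∑ a ∈ A, (empDist Z ω a - p a)} ≤ exp (-2 * n * δ ^ 2) := by
  set f : α → ℝ := (A : Set α).indicator 1
  have hmean : ∀ k, μ[fun ω => f (Z k ω)] = ∑ a ∈ A, p a := fun k => by
    rw [← integral_map (hmeas k).aemeasurable (measurable_of_finite f).aestronglyMeasurable,
      hdist k, integral_indicator_one A.measurableSet, measureReal_distMeasure hp]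
  have hsubG : ∀ k ∈ (univ : Finset (Fin n)),
      HasSubgaussianMGF (fun ω => f (Z k ω) - ∑ a ∈ A, p a) ((‖(1 : ℝ) - 0‖₊ / 2) ^ 2) μ :=
    fun k _ => hmean k ▸ hasSubgaussianMGF_of_mem_Icc
      ((measurable_of_finite f).comp (hmeas k)).aemeasurable
      (ae_of_all _ fun ω => by simp only [f, Set.indicator_apply]; split_ifs <;> simp)
  have h := HasSubgaussianMGF.measure_sum_ge_le_of_iIndepFun
    (hindep.comp (fun _ a => f a - ∑ a ∈ A, p a) fun _ => measurable_of_finite _) hsubG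
    (ε := n * δ) (by positivity)
  have hset : {ω | δ ≤ ∑ a ∈ A, (empDist Z ω a - p a)} =
      {ω | n * δ ≤ ∑ k, (f (Z k ω) - ∑ a ∈ A, p a)} := by
    ext ω
    simp only [Set.mem_ofPred_eq, sum_sub_distrib, sum_empDist_eq, sum_const, card_univ,
      Fintype.card_fin, nsmul_eq_mul]
    have hn' : (0 : ℝ) < n := by exact_mod_cast hn
    rw [← sub_nonneg, ← sub_nonneg (b := n * δ), ← mul_nonneg_iff_of_pos_left hn', mul_sub,
      mul_sub, mul_div_cancel₀ _ hn'.ne']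
  rw [hset]
  refine h.trans_eq ?_
  congr 1
  simp only [sub_zero, nnnorm_one, sum_const, card_univ, Fintype.card_fin, nsmul_eq_mul]
  push_cast
  field_simp

theorem measureReal_lt_vdist_empDist_le (hn : 0 < n) (hmeas : ∀ k, Measurable (Z k))
    (hindep : iIndepFun Z μ) (hp : IsDist p) (hdist : ∀ k, μ.map (Z k) = distMeasure p)
    {ε : ℝ} (hε : 0 ≤ ε) :
    μ.real {ω | ε < Vdist (empDist Z ω) p} ≤
      (2 ^ Fintype.card α - 2) * exp (-(n * ε ^ 2) / 2) := by
  set 𝒜 : Finset (Finset α) := univ \ {∅, univ}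
  have hne : Nonempty α := by
    by_contra h
    simpa [not_nonempty_iff.1 h] using hp.2
  have hcard : (𝒜.card : ℝ) = 2 ^ Fintype.card α - 2 := by
    have h2 : 2 ≤ 2 ^ Fintype.card α := Nat.le_self_pow Fintype.card_ne_zero 2
    rw [card_sdiff_of_subset (subset_univ _), card_univ, Fintype.card_finset,
      card_pair univ_nonempty.ne_empty.symm, Nat.cast_sub h2]
    norm_num
  have hsub : {ω | ε < Vdist (empDist Z ω) p} ⊆
      ⋃ A ∈ 𝒜, {ω | ε / 2 ≤ ∑ a ∈ A, (empDist Z ω a - p a)} := fun ω hω => by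
    obtain ⟨A, hA, hA', hlt⟩ := exists_finset_lt_sum_sub (isDist_empDist hn Z ω).2 hp.2 hε hω
    exact Set.mem_biUnion (by simp [𝒜, hA, hA']) hlt.le
  calc μ.real {ω | ε < Vdist (empDist Z ω) p}
      ≤ ∑ A ∈ 𝒜, μ.real {ω | ε / 2 ≤ ∑ a ∈ A, (empDist Z ω a - p a)} :=
        (measureReal_mono hsub (measure_ne_top _ _)).trans (measureReal_biUnion_finset_le _ _)
    _ ≤ ∑ _A ∈ 𝒜, exp (-2 * n * (ε / 2) ^ 2) := sum_le_sum fun A _ =>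
        measureReal_le_sum_empDist_sub_le hn hmeas hindep hp.1 hdist A (by positivity)
    _ = (2 ^ Fintype.card α - 2) * exp (-(n * ε ^ 2) / 2) := by
        rw [sum_const, nsmul_eq_mul, hcard]
        ring_nf

end EmpiricalDistribution

lemma mul_exp_neg_mul_sq_div_two_eq {K α ε : ℝ} {n : ℕ} (hn : 0 < n) (hα : 0 < α) (hαK : α ≤ K)
    (hε : ε = sqrt (2 / n * log (K / α))) : K * exp (-(n * ε ^ 2) / 2) = α := by
  have hn' : (0 : ℝ) < n := by exact_mod_cast hn
  have hlog : 0 ≤ log (K / α) := log_nonneg ((one_le_div hα).2 hαK)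
  rw [hε, sq_sqrt (by positivity), show -(n * (2 / n * log (K / α))) / 2 = -log (K / α) by
    field_simp, exp_neg, exp_log (div_pos (hα.trans_le hαK) hα), inv_div,
    mul_div_cancel₀ _ (hα.trans_le hαK).ne']

/-- Theorem 2: confidence interval for the mutual information.
With `ε = sqrt((2/n)·ln((2^(Mx·My)-2)/α))` and the half-width `ΔI(ε)` as in Theorem 1,
the interval `[I(p̂_n) - ΔI(ε), I(p̂_n) + ΔI(ε)]` contains `I(p)` with probability
at least `1 - α`. -/
theorem mutInfo_confidence_interval {Mx My : ℕ} (hMx : 2 ≤ Mx) (hMxy : Mx ≤ My)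
    (p : Fin Mx × Fin My → ℝ) (hp : IsDist p)
    (α : ℝ) (hα : α ∈ Set.Ioc (0 : ℝ) 1)
    {Ω : Type*} [MeasurableSpace Ω] (μ : Measure Ω) [IsProbabilityMeasure μ]
    {n : ℕ} (hn : 0 < n) (Z : Fin n → Ω → Fin Mx × Fin My)
    (hmeas : ∀ k, Measurable (Z k))
    (hindep : ProbabilityTheory.iIndepFun Z μ)
    (hdist : ∀ k, Measure.map (Z k) μ = distMeasure p)
    (ε : ℝ) (hε : ε = Real.sqrt (2 / (n : ℝ) * Real.log (((2 : ℝ) ^ (Mx * My) - 2) / α)))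
    (ΔI : ℝ)
    (hΔI : ΔI = if ε ≤ 2 - 2 / (Mx : ℝ) then
        ε / 2 * Real.log (((Mx : ℝ) * My - 1) * ((Mx : ℝ) - 1) * ((My : ℝ) - 1)) +
          3 * binEnt (ε / 2)
      else Real.log (Mx : ℝ)) :
    (μ {ω | mutInfo (empDist Z ω) - ΔI ≤ mutInfo p ∧
            mutInfo p ≤ mutInfo (empDist Z ω) + ΔI}).toReal ≥ 1 - α := by
  set T := {ω | mutInfo (empDist Z ω) - ΔI ≤ mutInfo p ∧ mutInfo p ≤ mutInfo (empDist Z ω) + ΔI}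
  have hK : 1 ≤ (2 : ℝ) ^ (Mx * My) - 2 := by
    have : (2 : ℝ) ^ 2 ≤ 2 ^ (Mx * My) := pow_le_pow_right₀ one_le_two (by nlinarith)
    linarith
  have hexp := mul_exp_neg_mul_sq_div_two_eq hn hα.1 (hα.2.trans hK) hε
  have hbad := measureReal_lt_vdist_empDist_le hn hmeas hindep hp hdist (hε ▸ sqrt_nonneg _)
  rw [Fintype.card_prod, Fintype.card_fin, Fintype.card_fin, hexp] at hbad
  have hgood : {ω | ε < Vdist (empDist Z ω) p}ᶜ ⊆ T := fun ω hω => by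
    have := abs_mutInfo_sub_le_mutInfoHalfWidth hMx hMxy hp (isDist_empDist hn Z ω)
      (not_lt.1 hω)
    rw [mutInfoHalfWidth, ← hΔI] at this
    exact ⟨by linarith [abs_le.1 this], by linarith [abs_le.1 this]⟩
  show 1 - α ≤ μ.real T
  have hunion := measureReal_union_le (μ := μ) T Tᶜ
  rw [Set.union_compl_self, probReal_univ] at hunion
  linarith [measureReal_mono (μ := μ) (Set.compl_subset_comm.1 hgood)]
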